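/- The rapidly decreasing matrices absorb Toeplitz matrices of smooth symbols on both sides: if a : ℕ × ℕ → ℂ is a rapidly decreasing matrix and f : ℝ → ℂ is a smooth function with f(t+1) = f(t), then for all i, j ∈ ℕ the series Σ_{k=0}^∞ a(i,k)·f̂(k−j) and Σ_{k=0}^∞ f̂(i−k)·a(k,j) converge absolutely, and both matrices u(i,j) = Σ_{k=0}^∞ a(i,k)·f̂(k−j) and v(i,j) = Σ_{k=0}^∞ f̂(i−k)·a(k,j) are rapidly decreasing. -/

import Mathlib

/-- The `n`-th Fourier coefficient `f̂(n) = ∫₀¹ f(t)·exp(−2πint) dt` of a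
1-periodic function. -/
noncomputable def fc (f : ℝ → ℂ) (n : ℤ) : ℂ :=
  ∫ t in (0:ℝ)..1, f t * Complex.exp (-(2 * (Real.pi : ℂ) * Complex.I * (n : ℂ) * (t : ℂ)))

/-- A matrix `a : ℕ × ℕ → ℂ` is rapidly decreasing (a smooth compact operator) if
`sup_{i,j} (1+i)^m (1+j)^n |a(i,j)| < ∞` for all `m, n`. -/
def RapidDecay (a : ℕ → ℕ → ℂ) : Prop :=
  ∀ m n : ℕ, ∃ C : ℝ, ∀ i j : ℕ,
    (1 + (i : ℝ)) ^ m * (1 + (j : ℝ)) ^ n * ‖a i j‖ ≤ C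


open Complex intervalIntegral

/-- Integration by parts relation for Fourier coefficients. -/
lemma fc_deriv (f : ℝ → ℂ) (hf : ContDiff ℝ (⊤ : ℕ∞) f) (hfp : Function.Periodic f 1) (n : ℤ) :
    fc (deriv f) n = 2 * (Real.pi : ℂ) * Complex.I * (n : ℂ) * fc f n := by
  set c : ℂ := -(2 * (Real.pi : ℂ) * Complex.I * (n : ℂ)) with hc
  have hec : Continuous fun t : ℝ => Complex.exp (c * t) :=
    Complex.continuous_exp.comp (continuous_const.mul Complex.continuous_ofReal)
  have he : ∀ x : ℝ, HasDerivAt (fun t : ℝ => Complex.exp (c * t)) (c * Complex.exp (c * x)) x := by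
    intro x
    have h1 : HasDerivAt (fun z : ℂ => Complex.exp (c * z)) (c * Complex.exp (c * x)) (x : ℂ) := by
      have h0 := (Complex.hasDerivAt_exp (c * x)).comp (x : ℂ)
        ((hasDerivAt_id (x : ℂ)).const_mul c)
      simpa [Function.comp_def, mul_comm (Complex.exp (c * (x:ℂ))) c] using h0
    exact h1.comp_ofReal
  have hg : ∀ x : ℝ, HasDerivAt (fun t : ℝ => f t * Complex.exp (c * t))
      (deriv f x * Complex.exp (c * x) + f x * (c * Complex.exp (c * x))) x := fun x =>
    ((hf.differentiable (by simp) x).hasDerivAt).mul (he x)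
  have hint : (∫ t in (0:ℝ)..1, (deriv f t * Complex.exp (c * t)
      + f t * (c * Complex.exp (c * t))))
      = f 1 * Complex.exp (c * 1) - f 0 * Complex.exp (c * 0) := by
    apply intervalIntegral.integral_eq_sub_of_hasDerivAt (fun x _ => hg x)
    exact (((hf.continuous_deriv (by simp)).mul hec).add
      (hf.continuous.mul (continuous_const.mul hec))).intervalIntegrable 0 1
  have hexp1 : Complex.exp (c * 1) = 1 := by
    rw [show c * 1 = ((-n : ℤ) : ℂ) * (2 * (Real.pi : ℂ) * Complex.I) by push_cast [hc]; ring]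
    exact Complex.exp_int_mul_two_pi_mul_I (-n)
  have hf10 : f 1 = f 0 := by simpa using hfp 0
  have hz : (∫ t in (0:ℝ)..1, (deriv f t * Complex.exp (c * t)
      + f t * (c * Complex.exp (c * t)))) = 0 := by
    rw [hint, hexp1, hf10]; simp
  have hi1 : IntervalIntegrable (fun t : ℝ => deriv f t * Complex.exp (c * t))
      MeasureTheory.volume 0 1 :=
    ((hf.continuous_deriv (by simp)).mul hec).intervalIntegrable 0 1
  have hi2 : IntervalIntegrable (fun t : ℝ => f t * (c * Complex.exp (c * t)))
      MeasureTheory.volume 0 1 :=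
    (hf.continuous.mul (continuous_const.mul hec)).intervalIntegrable 0 1
  rw [intervalIntegral.integral_add hi1 hi2] at hz
  have e1 : fc (deriv f) n = ∫ t in (0:ℝ)..1, deriv f t * Complex.exp (c * t) := by
    unfold fc
    apply intervalIntegral.integral_congr
    intro t _
    congr 1
    rw [hc]; ring
  have e2 : (∫ t in (0:ℝ)..1, f t * (c * Complex.exp (c * t))) = c * fc f n := by
    rw [show (fun t : ℝ => f t * (c * Complex.exp (c * t)))
        = fun t : ℝ => c * (f t * Complex.exp (c * t)) by funext t; ring]
    rw [intervalIntegral.integral_const_mul]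
    unfold fc
    congr 1
    apply intervalIntegral.integral_congr
    intro t _
    congr 1
    rw [hc]; ring
  rw [← e1, e2] at hz
  have h3 : fc (deriv f) n = -c * fc f n := by linear_combination hz
  rw [h3, hc]; ring

/-- Periodicity of the derivative. -/
lemma periodic_deriv' (f : ℝ → ℂ) (hfp : Function.Periodic f 1) :
    Function.Periodic (deriv f) 1 := by
  intro x
  have : deriv (fun y : ℝ => f (y + 1)) x = deriv f (x + 1) := deriv_comp_add_const f 1 x
  rw [← this]
  congr 1
  funext y
  exact hfp y

/-- |fc f n| is bounded by the sup of |f| on [0,1]. -/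
lemma fc_bounded (f : ℝ → ℂ) (hf : ContDiff ℝ (⊤ : ℕ∞) f) :
    ∃ M : ℝ, ∀ n : ℤ, ‖fc f n‖ ≤ M := by
  obtain ⟨M, hM⟩ := (isCompact_Icc (a := (0:ℝ)) (b := 1)).exists_bound_of_continuousOn
    hf.continuous.continuousOn
  refine ⟨M, fun n => ?_⟩
  have := intervalIntegral.norm_integral_le_of_norm_le_const
    (C := M) (f := fun t : ℝ => f t * Complex.exp (-(2 * (Real.pi : ℂ) * Complex.I * (n:ℂ) * (t:ℂ))))
    (a := 0) (b := 1) ?_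
  · simpa [fc] using this
  · intro t ht
    rw [Set.uIoc_of_le (by norm_num : (0:ℝ) ≤ 1)] at ht
    have habs : ‖Complex.exp (-(2 * (Real.pi : ℂ) * Complex.I * (n:ℂ) * (t:ℂ)))‖ = 1 := by
      rw [show -(2 * (Real.pi : ℂ) * Complex.I * (n:ℂ) * (t:ℂ))
          = ((-(2 * Real.pi * n * t) : ℝ) : ℂ) * Complex.I by push_cast; ring]
      exact Complex.norm_exp_ofReal_mul_I _
    rw [show ‖f t * Complex.exp (-(2 * (Real.pi : ℂ) * Complex.I * (n:ℂ) * (t:ℂ)))‖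
        = ‖f t‖ * ‖Complex.exp (-(2 * (Real.pi : ℂ) * Complex.I * (n:ℂ) * (t:ℂ)))‖ from norm_mul _ _]
    rw [habs, mul_one]
    exact hM t ⟨le_of_lt ht.1, ht.2⟩

lemma fc_abs_pow_bound : ∀ (m : ℕ) (f : ℝ → ℂ), ContDiff ℝ (⊤ : ℕ∞) f → Function.Periodic f 1 →
    ∃ C : ℝ, ∀ n : ℤ, |(n : ℝ)| ^ m * ‖fc f n‖ ≤ C := by
  intro m
  induction m with
  | zero =>
    intro f hf _
    obtain ⟨M, hM⟩ := fc_bounded f hf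
    exact ⟨M, fun n => by simpa using hM n⟩
  | succ m ih =>
    intro f hf hfp
    have hfd : ContDiff ℝ (⊤ : ℕ∞) (deriv f) := by
      have h : ContDiff ℝ (((⊤ : ℕ∞) : WithTop ℕ∞) + 1) f := hf.of_le (by exact_mod_cast le_top)
      exact (contDiff_succ_iff_deriv.mp h).2.2
    obtain ⟨C, hC⟩ := ih (deriv f) hfd (periodic_deriv' f hfp)
    refine ⟨C / (2 * Real.pi), fun n => ?_⟩
    have key := fc_deriv f hf hfp n
    have h2 : ‖fc (deriv f) n‖
        = 2 * Real.pi * |(n : ℝ)| * ‖fc f n‖ := by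
      rw [key]
      rw [norm_mul]
      congr 1
      rw [show (2 * (Real.pi : ℂ) * Complex.I * (n:ℂ)) = (((2 * Real.pi : ℝ)) : ℂ) * (n:ℂ) * Complex.I by push_cast; ring]
      rw [norm_mul, norm_mul]
      simp [Complex.norm_real, Complex.norm_intCast, abs_of_pos Real.pi_pos,
        abs_of_pos Real.two_pi_pos]
    have h3 := hC n
    rw [h2] at h3
    have hpi : (0:ℝ) < 2 * Real.pi := Real.two_pi_pos
    rw [le_div_iff₀ hpi]
    calc |(n : ℝ)| ^ (m + 1) * ‖fc f n‖ * (2 * Real.pi)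
        = |(n : ℝ)| ^ m * (2 * Real.pi * |(n : ℝ)| * ‖fc f n‖) := by ring
      _ ≤ C := h3

/-- Polynomial decay of Fourier coefficients of a smooth periodic function. -/
lemma fc_decay (f : ℝ → ℂ) (hf : ContDiff ℝ (⊤ : ℕ∞) f) (hfp : Function.Periodic f 1) (m : ℕ) :
    ∃ C : ℝ, 0 ≤ C ∧ ∀ n : ℤ, (1 + |(n : ℝ)|) ^ m * ‖fc f n‖ ≤ C := by
  obtain ⟨C0, hC0⟩ := fc_abs_pow_bound 0 f hf hfp
  obtain ⟨Cm, hCm⟩ := fc_abs_pow_bound m f hf hfp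
  refine ⟨2 ^ m * (C0 + Cm), ?_, fun n => ?_⟩
  · have h1 := hC0 0
    have h2 := hCm 0
    simp at h1 h2
    have hc0 : (0:ℝ) ≤ C0 := le_trans (norm_nonneg _) h1
    have hcm : (0:ℝ) ≤ Cm := le_trans (by positivity) h2
    positivity
  · have hx : (0:ℝ) ≤ |(n : ℝ)| := abs_nonneg _
    have hb : (1 + |(n : ℝ)|) ^ m ≤ 2 ^ m * (1 + |(n : ℝ)| ^ m) := by
      rcases le_total |(n : ℝ)| 1 with h | h
      · calc (1 + |(n : ℝ)|) ^ m ≤ 2 ^ m := by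
              apply pow_le_pow_left₀ (by linarith) (by linarith)
            _ ≤ 2 ^ m * (1 + |(n : ℝ)| ^ m) := by nlinarith [pow_nonneg hx m, pow_pos (show (0:ℝ) < 2 by norm_num) m]
      · calc (1 + |(n : ℝ)|) ^ m ≤ (2 * |(n : ℝ)|) ^ m := by
              apply pow_le_pow_left₀ (by linarith) (by linarith)
            _ = 2 ^ m * |(n : ℝ)| ^ m := mul_pow 2 _ m
            _ ≤ 2 ^ m * (1 + |(n : ℝ)| ^ m) := by nlinarith [pow_pos (show (0:ℝ) < 2 by norm_num) m]
    calc (1 + |(n : ℝ)|) ^ m * ‖fc f n‖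
        ≤ 2 ^ m * (1 + |(n : ℝ)| ^ m) * ‖fc f n‖ := by
          apply mul_le_mul_of_nonneg_right hb (norm_nonneg _)
      _ = 2 ^ m * (‖fc f n‖ + |(n : ℝ)| ^ m * ‖fc f n‖) := by ring
      _ ≤ 2 ^ m * (C0 + Cm) := by
          have h1 := hC0 n
          simp at h1
          have h2 := hCm n
          have h2pow : (0:ℝ) ≤ 2 ^ m := by positivity
          apply mul_le_mul_of_nonneg_left _ h2pow
          linarith

lemma one_add_nat_le (j k : ℕ) : (1 + (j:ℝ)) ≤ (1 + (k:ℝ)) * (1 + |(k:ℝ) - (j:ℝ)|) := by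
  have h1 : (j:ℝ) - k ≤ |(k:ℝ) - (j:ℝ)| := by rw [abs_sub_comm]; exact le_abs_self _
  have h2 : (0:ℝ) ≤ |(k:ℝ) - (j:ℝ)| := abs_nonneg _
  have h3 : (0:ℝ) ≤ (k:ℝ) := Nat.cast_nonneg k
  nlinarith

lemma key_u (a : ℕ → ℕ → ℂ) (ha : RapidDecay a) (f : ℝ → ℂ) (hf : ContDiff ℝ (⊤ : ℕ∞) f)
    (hfp : Function.Periodic f 1) (m n : ℕ) : ∃ B : ℝ, 0 ≤ B ∧ ∀ i j k : ℕ,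
    (1 + (i:ℝ))^m * (1 + (j:ℝ))^n * ‖a i k * fc f ((k:ℤ) - j)‖
      ≤ B * (1 / (1 + (k:ℝ))^2) := by
  obtain ⟨A, hA⟩ := ha m (n + 2)
  have hA0 : (0:ℝ) ≤ A := le_trans (by positivity) (hA 0 0)
  obtain ⟨F, hF0, hF⟩ := fc_decay f hf hfp n
  refine ⟨A * F, by positivity, fun i j k => ?_⟩
  have hd : (1 + |(k:ℝ) - (j:ℝ)|)^n * ‖fc f ((k:ℤ) - j)‖ ≤ F := by
    have h := hF ((k:ℤ) - j)
    push_cast at h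
    exact h
  have hpow : (1 + (j:ℝ))^n ≤ (1 + (k:ℝ))^n * (1 + |(k:ℝ) - (j:ℝ)|)^n := by
    rw [← mul_pow]
    exact pow_le_pow_left₀ (by positivity) (one_add_nat_le j k) n
  have hk2 : (0:ℝ) < (1 + (k:ℝ))^2 := by positivity
  have habs0 : (0:ℝ) ≤ ‖a i k‖ := norm_nonneg _
  have hfc0 : (0:ℝ) ≤ ‖fc f ((k:ℤ) - j)‖ := norm_nonneg _
  have hi0 : (0:ℝ) ≤ (1 + (i:ℝ))^m := by positivity
  have hstep : (1 + (i:ℝ))^m * (1 + (k:ℝ))^n * ‖a i k‖ ≤ A / (1 + (k:ℝ))^2 := by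
    rw [le_div_iff₀ hk2]
    calc (1 + (i:ℝ))^m * (1 + (k:ℝ))^n * ‖a i k‖ * (1 + (k:ℝ))^2
        = (1 + (i:ℝ))^m * (1 + (k:ℝ))^(n+2) * ‖a i k‖ := by rw [pow_add]; ring
      _ ≤ A := hA i k
  calc (1 + (i:ℝ))^m * (1 + (j:ℝ))^n * ‖a i k * fc f ((k:ℤ) - j)‖
      = ((1 + (i:ℝ))^m * ‖a i k‖) * ((1 + (j:ℝ))^n * ‖fc f ((k:ℤ) - j)‖) := by
        rw [norm_mul]; ring
    _ ≤ ((1 + (i:ℝ))^m * ‖a i k‖) *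
        (((1 + (k:ℝ))^n * (1 + |(k:ℝ) - (j:ℝ)|)^n) * ‖fc f ((k:ℤ) - j)‖) := by
        apply mul_le_mul_of_nonneg_left (mul_le_mul_of_nonneg_right hpow hfc0) (by positivity)
    _ = ((1 + (i:ℝ))^m * (1 + (k:ℝ))^n * ‖a i k‖) *
        ((1 + |(k:ℝ) - (j:ℝ)|)^n * ‖fc f ((k:ℤ) - j)‖) := by ring
    _ ≤ (A / (1 + (k:ℝ))^2) * F := by
        apply mul_le_mul hstep hd (by positivity) (by positivity)
    _ = A * F * (1 / (1 + (k:ℝ))^2) := by ring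

lemma key_v (a : ℕ → ℕ → ℂ) (ha : RapidDecay a) (f : ℝ → ℂ) (hf : ContDiff ℝ (⊤ : ℕ∞) f)
    (hfp : Function.Periodic f 1) (m n : ℕ) : ∃ B : ℝ, 0 ≤ B ∧ ∀ i j k : ℕ,
    (1 + (i:ℝ))^m * (1 + (j:ℝ))^n * ‖fc f ((i:ℤ) - k) * a k j‖
      ≤ B * (1 / (1 + (k:ℝ))^2) := by
  obtain ⟨A, hA⟩ := ha (m + 2) n
  have hA0 : (0:ℝ) ≤ A := le_trans (by positivity) (hA 0 0)
  obtain ⟨F, hF0, hF⟩ := fc_decay f hf hfp m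
  refine ⟨A * F, by positivity, fun i j k => ?_⟩
  have hd : (1 + |(i:ℝ) - (k:ℝ)|)^m * ‖fc f ((i:ℤ) - k)‖ ≤ F := by
    have h := hF ((i:ℤ) - k)
    push_cast at h
    exact h
  have hpow : (1 + (i:ℝ))^m ≤ (1 + (k:ℝ))^m * (1 + |(i:ℝ) - (k:ℝ)|)^m := by
    rw [← mul_pow]
    have := one_add_nat_le i k
    rw [abs_sub_comm] at this
    exact pow_le_pow_left₀ (by positivity) this m
  have hk2 : (0:ℝ) < (1 + (k:ℝ))^2 := by positivity
  have hfc0 : (0:ℝ) ≤ ‖fc f ((i:ℤ) - k)‖ := norm_nonneg _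
  have hstep : (1 + (k:ℝ))^m * (1 + (j:ℝ))^n * ‖a k j‖ ≤ A / (1 + (k:ℝ))^2 := by
    rw [le_div_iff₀ hk2]
    calc (1 + (k:ℝ))^m * (1 + (j:ℝ))^n * ‖a k j‖ * (1 + (k:ℝ))^2
        = (1 + (k:ℝ))^(m+2) * (1 + (j:ℝ))^n * ‖a k j‖ := by rw [pow_add]; ring
      _ ≤ A := hA k j
  calc (1 + (i:ℝ))^m * (1 + (j:ℝ))^n * ‖fc f ((i:ℤ) - k) * a k j‖
      = ((1 + (i:ℝ))^m * ‖fc f ((i:ℤ) - k)‖) * ((1 + (j:ℝ))^n * ‖a k j‖) := by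
        rw [norm_mul]; ring
    _ ≤ (((1 + (k:ℝ))^m * (1 + |(i:ℝ) - (k:ℝ)|)^m) * ‖fc f ((i:ℤ) - k)‖) *
        ((1 + (j:ℝ))^n * ‖a k j‖) := by
        apply mul_le_mul_of_nonneg_right (mul_le_mul_of_nonneg_right hpow hfc0) (by positivity)
    _ = ((1 + |(i:ℝ) - (k:ℝ)|)^m * ‖fc f ((i:ℤ) - k)‖) *
        ((1 + (k:ℝ))^m * (1 + (j:ℝ))^n * ‖a k j‖) := by ring
    _ ≤ F * (A / (1 + (k:ℝ))^2) := by
        apply mul_le_mul hd hstep (by positivity) hF0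
    _ = A * F * (1 / (1 + (k:ℝ))^2) := by ring

lemma hS_sum : Summable (fun k : ℕ => 1 / (1 + (k:ℝ))^2) := by
  have h := (summable_nat_add_iff 1).mpr (Real.summable_one_div_nat_pow.mpr (by norm_num : 1 < 2))
  apply h.congr
  intro k
  push_cast
  rw [add_comm]

/-- The rapidly decreasing matrices absorb Toeplitz matrices of smooth symbols on
both sides: the defining series converge absolutely and the products
`u(i,j) = Σ_k a(i,k)·f̂(k−j)` and `v(i,j) = Σ_k f̂(i−k)·a(k,j)` are rapidly
decreasing. -/
theorem stmt12 (a : ℕ → ℕ → ℂ) (ha : RapidDecay a)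
    (f : ℝ → ℂ) (hf : ContDiff ℝ (⊤ : ℕ∞) f) (hfp : Function.Periodic f 1) :
    (∀ i j : ℕ, Summable fun k : ℕ => ‖a i k * fc f ((k : ℤ) - j)‖) ∧
    (∀ i j : ℕ, Summable fun k : ℕ => ‖fc f ((i : ℤ) - k) * a k j‖) ∧
    RapidDecay (fun i j => ∑' k : ℕ, a i k * fc f ((k : ℤ) - j)) ∧
    RapidDecay (fun i j => ∑' k : ℕ, fc f ((i : ℤ) - k) * a k j) := by
  have hsum_u : ∀ i j : ℕ, Summable fun k : ℕ => ‖a i k * fc f ((k : ℤ) - j)‖ := by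
    intro i j
    obtain ⟨B, hB0, hB⟩ := key_u a ha f hf hfp 0 0
    apply Summable.of_nonneg_of_le (fun k => norm_nonneg _) (fun k => ?_) (hS_sum.mul_left B)
    have h := hB i j k
    simpa using h
  have hsum_v : ∀ i j : ℕ, Summable fun k : ℕ => ‖fc f ((i : ℤ) - k) * a k j‖ := by
    intro i j
    obtain ⟨B, hB0, hB⟩ := key_v a ha f hf hfp 0 0
    apply Summable.of_nonneg_of_le (fun k => norm_nonneg _) (fun k => ?_) (hS_sum.mul_left B)
    have h := hB i j k
    simpa using h
  refine ⟨hsum_u, hsum_v, ?_, ?_⟩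
  · intro m n
    obtain ⟨B, hB0, hB⟩ := key_u a ha f hf hfp m n
    refine ⟨B * ∑' k : ℕ, 1 / (1 + (k:ℝ))^2, fun i j => ?_⟩
    have h1 : ‖∑' k : ℕ, a i k * fc f ((k:ℤ) - j)‖
        ≤ ∑' k : ℕ, ‖a i k * fc f ((k:ℤ) - j)‖ := by
      simpa using
        norm_tsum_le_tsum_norm (f := fun k : ℕ => a i k * fc f ((k:ℤ) - j))
          (by simpa using hsum_u i j)
    calc (1 + (i:ℝ))^m * (1 + (j:ℝ))^n * ‖∑' k : ℕ, a i k * fc f ((k:ℤ) - j)‖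
        ≤ (1 + (i:ℝ))^m * (1 + (j:ℝ))^n * ∑' k : ℕ, ‖a i k * fc f ((k:ℤ) - j)‖ := by
          apply mul_le_mul_of_nonneg_left h1 (by positivity)
      _ = ∑' k : ℕ, (1 + (i:ℝ))^m * (1 + (j:ℝ))^n * ‖a i k * fc f ((k:ℤ) - j)‖ := by
          rw [tsum_mul_left]
      _ ≤ ∑' k : ℕ, B * (1 / (1 + (k:ℝ))^2) := by
          apply Summable.tsum_le_tsum (fun k => hB i j k) ((hsum_u i j).mul_left _) (hS_sum.mul_left B)
      _ = B * ∑' k : ℕ, 1 / (1 + (k:ℝ))^2 := tsum_mul_left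
  · intro m n
    obtain ⟨B, hB0, hB⟩ := key_v a ha f hf hfp m n
    refine ⟨B * ∑' k : ℕ, 1 / (1 + (k:ℝ))^2, fun i j => ?_⟩
    have h1 : ‖∑' k : ℕ, fc f ((i:ℤ) - k) * a k j‖
        ≤ ∑' k : ℕ, ‖fc f ((i:ℤ) - k) * a k j‖ := by
      simpa using
        norm_tsum_le_tsum_norm (f := fun k : ℕ => fc f ((i:ℤ) - k) * a k j)
          (by simpa using hsum_v i j)
    calc (1 + (i:ℝ))^m * (1 + (j:ℝ))^n * ‖∑' k : ℕ, fc f ((i:ℤ) - k) * a k j‖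
        ≤ (1 + (i:ℝ))^m * (1 + (j:ℝ))^n * ∑' k : ℕ, ‖fc f ((i:ℤ) - k) * a k j‖ := by
          apply mul_le_mul_of_nonneg_left h1 (by positivity)
      _ = ∑' k : ℕ, (1 + (i:ℝ))^m * (1 + (j:ℝ))^n * ‖fc f ((i:ℤ) - k) * a k j‖ := by
          rw [tsum_mul_left]
      _ ≤ ∑' k : ℕ, B * (1 / (1 + (k:ℝ))^2) := by
          apply Summable.tsum_le_tsum (fun k => hB i j k) ((hsum_v i j).mul_left _) (hS_sum.mul_left B)
      _ = B * ∑' k : ℕ, 1 / (1 + (k:ℝ))^2 := tsum_mul_left
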